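/- arXiv:0910.5940 — 2 statements merged into one kernel-verified Lean document; each statement's English description precedes it below -/
import Mathlib

section
/- Let e ≥ 2 and let λ be a partition of d with λ₁ < e. Then in ℤ[q,q^{−1}], the sum of q^{deg(T)} over all standard λ-tableaux T with residue sequence i^T equal to the ladder weight j^λ is equal to 1; that is, there is exactly one such tableau and it has degree 0. -/
namespace KN

/-- A subset of `ℤ²_{≥1}` (encoded in `ℕ × ℕ`) shaped like a Young diagram:
all coordinates are `≥ 1` and the set is closed under decreasing either coordinate
(staying `≥ 1`). -/
def IsDiagram (S : Set (ℕ × ℕ)) : Prop :=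
  (∀ p ∈ S, 1 ≤ p.1 ∧ 1 ≤ p.2) ∧
  ∀ a b a' b', (a, b) ∈ S → 1 ≤ a' → a' ≤ a → 1 ≤ b' → b' ≤ b → (a', b') ∈ S

/-- The Young diagram of a partition given as a function `l : ℕ → ℕ`
(`l r` is the `r`-th part, for `r ≥ 1`): the nodes `(a, b)` with `a, b ≥ 1`, `b ≤ l a`. -/
def cells (l : ℕ → ℕ) : Set (ℕ × ℕ) := {p | 1 ≤ p.1 ∧ 1 ≤ p.2 ∧ p.2 ≤ l p.1}

/-- `l` (indexed from `1`) is a weakly decreasing sequence of naturals, eventually zero. -/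
def IsPartitionFun (l : ℕ → ℕ) : Prop :=
  (∀ r, 1 ≤ r → l (r + 1) ≤ l r) ∧ ∃ N, ∀ r, N ≤ r → l r = 0

/-- `l` is a partition of `d`: its Young diagram has exactly `d` nodes. -/
def IsPartitionOf (l : ℕ → ℕ) (d : ℕ) : Prop :=
  IsPartitionFun l ∧ (cells l).Finite ∧ (cells l).ncard = d

/-- `λ_r - λ_{r+1} < e` for all `r ≥ 1`. -/
def IsRestricted (e : ℕ) (l : ℕ → ℕ) : Prop := ∀ r, 1 ≤ r → l r < l (r + 1) + e

/-- The `m`-th ladder `L_m = {(1 + k, m - k(e-1)) : k ≥ 0, k(e-1) < m}`. -/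
def ladder (e m : ℕ) : Set (ℕ × ℕ) :=
  {p | ∃ k : ℕ, k * (e - 1) < m ∧ p = (1 + k, m - k * (e - 1))}

/-- The residue `b - a (mod e)` of a node `(a, b)`. -/
def res (e : ℕ) (p : ℕ × ℕ) : ZMod e := (p.2 : ZMod e) - (p.1 : ZMod e)

/-- `A` is a removable node of the diagram `S`. -/
def Removable (S : Set (ℕ × ℕ)) (A : ℕ × ℕ) : Prop := A ∈ S ∧ IsDiagram (S \ {A})

/-- `B` is an addable node of the diagram `S`. -/
def Addable (S : Set (ℕ × ℕ)) (B : ℕ × ℕ) : Prop := B ∉ S ∧ IsDiagram (S ∪ {B})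

/-- `σ_k` of a diagram: the number of nodes in rows `1, …, k`. -/
noncomputable def sigmaSet (S : Set (ℕ × ℕ)) (k : ℕ) : ℕ := (S ∩ {p | p.1 ≤ k}).ncard

/-- Dominance order on diagrams: `S ⊴ T` iff `σ_k(S) ≤ σ_k(T)` for all `k`. -/
def DomLE (S T : Set (ℕ × ℕ)) : Prop := ∀ k, sigmaSet S k ≤ sigmaSet T k

/-- `R_m = r_1(λ) + ⋯ + r_m(λ)` where `r_u(λ) = |λ ∩ L_u|`. -/
noncomputable def Rlad (e : ℕ) (l : ℕ → ℕ) (m : ℕ) : ℕ :=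
  ∑ u ∈ Finset.Icc 1 m, (cells l ∩ ladder e u).ncard

/-- The `s`-th entry of the ladder weight `j^λ`: it equals `m - 1 (mod e)` for the
unique `m` with `R_{m-1} < s ≤ R_m`. -/
noncomputable def ladderWeight (e : ℕ) (l : ℕ → ℕ) (s : ℕ) : ZMod e :=
  ((sInf {m : ℕ | s ≤ Rlad e l m} - 1 : ℕ) : ZMod e)

/-- A standard tableau of shape `S` (with `|S| = d`): a bijective labelling of the
nodes of `S` by `1, …, d`, increasing along rows and columns. -/
def IsStandardTableau (S : Set (ℕ × ℕ)) (d : ℕ) (T : ℕ × ℕ → ℕ) : Prop :=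
  (∀ p ∈ S, 1 ≤ T p ∧ T p ≤ d) ∧
  (∀ p ∈ S, ∀ q ∈ S, T p = T q → p = q) ∧
  (∀ s, 1 ≤ s → s ≤ d → ∃ p ∈ S, T p = s) ∧
  (∀ a b, (a, b) ∈ S → (a, b + 1) ∈ S → T (a, b) < T (a, b + 1)) ∧
  (∀ a b, (a, b) ∈ S → (a + 1, b) ∈ S → T (a, b) < T (a + 1, b))

/-- The degree `d_A(S)` of a removable node `A` of `S`:
(number of addable nodes of `S` of the same residue strictly below `A`) minus
(number of removable nodes of `S` of the same residue strictly below `A`). -/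
noncomputable def degNode (e : ℕ) (S : Set (ℕ × ℕ)) (A : ℕ × ℕ) : ℤ :=
  (({B | Addable S B ∧ res e B = res e A ∧ A.1 < B.1}).ncard : ℤ) -
  (({B | Removable S B ∧ res e B = res e A ∧ A.1 < B.1}).ncard : ℤ)

/-- The degree of a standard tableau: `deg(T) = Σ_{s=1}^d d_{A_s}(sh(T_{≤ s}))`,
written as a sum over the nodes `p` of `S` (with `s = T p`). -/
noncomputable def degTab (e : ℕ) (S : Set (ℕ × ℕ)) (T : ℕ × ℕ → ℕ) : ℤ :=
  ∑ᶠ p ∈ S, degNode e {q | q ∈ S ∧ T q ≤ T p} p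

/-- The set of standard tableaux of shape `S` (of size `d`) whose residue sequence
equals the ladder weight `j^λ` of the partition `l`; tableaux are normalized to
take the value `0` off `S`. -/
def LWTableaux (e d : ℕ) (l : ℕ → ℕ) (S : Set (ℕ × ℕ)) : Set ((ℕ × ℕ) → ℕ) :=
  {T | IsStandardTableau S d T ∧ (∀ p, p ∉ S → T p = 0) ∧
    ∀ p ∈ S, res e p = ladderWeight e l (T p)}

/-- The quantum integer `[n]_q = q^{n-1} + q^{n-3} + ⋯ + q^{1-n} ∈ ℤ[q, q⁻¹]`. -/
noncomputable def qint (n : ℕ) : LaurentPolynomial ℤ :=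
  ∑ k ∈ Finset.range n, LaurentPolynomial.T ((n : ℤ) - 1 - 2 * k)

/-- The quantum factorial `[n]_q! = [n]_q [n-1]_q ⋯ [1]_q`. -/
noncomputable def qfact (n : ℕ) : LaurentPolynomial ℤ :=
  ∏ k ∈ Finset.Icc 1 n, qint k


/-! ### Auxiliary development -/

/-- The ladder number of a node. -/
def mfun (e : ℕ) (p : ℕ × ℕ) : ℕ := p.2 + (p.1 - 1) * (e - 1)

/-- Cells of `l` in ladders `1, …, M`. -/
def below (e : ℕ) (l : ℕ → ℕ) (M : ℕ) : Set (ℕ × ℕ) :=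
  {q | q ∈ cells l ∧ mfun e q ≤ M}

open Classical in
/-- The ladder tableau. -/
noncomputable def T0 (e : ℕ) (l : ℕ → ℕ) : (ℕ × ℕ) → ℕ :=
  fun p => if p ∈ cells l then (below e l (mfun e p)).ncard else 0

section aux

variable {e d : ℕ} {l : ℕ → ℕ}

lemma mem_cells {p : ℕ × ℕ} : p ∈ cells l ↔ 1 ≤ p.1 ∧ 1 ≤ p.2 ∧ p.2 ≤ l p.1 := Iff.rfl

lemma l_anti (hl : IsPartitionFun l) : ∀ r r', 1 ≤ r → r ≤ r' → l r' ≤ l r := by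
  intro r r' h1 h2
  induction r' with
  | zero => omega
  | succ n ih =>
    rcases Nat.eq_or_lt_of_le h2 with h | h
    · rw [← h]
    · exact le_trans (hl.1 n (by omega)) (ih (by omega))

lemma col_lt (hl : IsPartitionFun l) (hfirst : l 1 < e) {p : ℕ × ℕ}
    (hp : p ∈ cells l) : p.2 < e := by
  obtain ⟨h1, h2, h3⟩ := hp
  have := l_anti hl 1 p.1 le_rfl h1
  omega

lemma mfun_pos {p : ℕ × ℕ} (hp : p ∈ cells l) : 1 ≤ mfun e p := by
  have := hp.2.1; unfold mfun; omega

lemma mfun_inj (he : 2 ≤ e) {p q : ℕ × ℕ} (hp1 : 1 ≤ p.1) (hp2 : 1 ≤ p.2) (hpe : p.2 < e)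
    (hq1 : 1 ≤ q.1) (hq2 : 1 ≤ q.2) (hqe : q.2 < e) (h : mfun e p = mfun e q) : p = q := by
  unfold mfun at h
  have key : ∀ a b : ℕ, a < b → a * (e-1) + (e-1) ≤ b * (e-1) := by
    intro a b hab
    calc a*(e-1)+(e-1) = (a+1)*(e-1) := by ring
    _ ≤ b*(e-1) := Nat.mul_le_mul_right _ (by omega)
  rcases lt_trichotomy p.1 q.1 with hc | hc | hc
  · have := key (p.1-1) (q.1-1) (by omega); omega
  · rw [hc] at h
    have h2 : p.2 = q.2 := by omega
    exact Prod.ext hc h2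
  · have := key (q.1-1) (p.1-1) (by omega); omega

lemma mem_ladder_iff {u : ℕ} {p : ℕ × ℕ} :
    p ∈ ladder e u ↔ 1 ≤ p.1 ∧ 1 ≤ p.2 ∧ mfun e p = u := by
  constructor
  · rintro ⟨k, hk, rfl⟩
    refine ⟨by omega, by omega, ?_⟩
    show (u - k * (e-1)) + (1 + k - 1) * (e - 1) = u
    rw [show 1 + k - 1 = k by omega]
    omega
  · rintro ⟨h1, h2, h3⟩
    refine ⟨p.1 - 1, ?_, ?_⟩
    · unfold mfun at h3; omega
    · unfold mfun at h3
      rw [Prod.ext_iff]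
      constructor
      · show p.1 = 1 + (p.1 - 1); omega
      · show p.2 = u - (p.1 - 1) * (e - 1); omega

lemma below_finite (hfin : (cells l).Finite) (M : ℕ) : (below e l M).Finite :=
  hfin.subset (fun q hq => hq.1)

lemma Rlad_eq (hfin : (cells l).Finite) (M : ℕ) :
    Rlad e l M = (below e l M).ncard := by
  induction M with
  | zero =>
    have h1 : Rlad e l 0 = 0 := by unfold Rlad; simp
    have h2 : below e l 0 = ∅ := by
      ext q
      simp only [below, Set.mem_setOf_eq, Set.mem_empty_iff_false, iff_false]
      rintro ⟨hq, hm⟩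
      have := mfun_pos (e := e) hq
      omega
    rw [h1, h2, Set.ncard_empty]
  | succ M ih =>
    have hstep : Rlad e l (M+1) = Rlad e l M + (cells l ∩ ladder e (M+1)).ncard := by
      unfold Rlad
      exact Finset.sum_Icc_succ_top (by omega) _
    have hil : cells l ∩ ladder e (M+1) = {q | q ∈ cells l ∧ mfun e q = M+1} := by
      ext q
      constructor
      · rintro ⟨hc, hlad⟩
        exact ⟨hc, (mem_ladder_iff.mp hlad).2.2⟩
      · rintro ⟨hc, hm⟩
        exact ⟨hc, mem_ladder_iff.mpr ⟨hc.1, hc.2.1, hm⟩⟩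
    have hsplit : below e l (M+1) = below e l M ∪ {q | q ∈ cells l ∧ mfun e q = M+1} := by
      ext q
      simp only [below, Set.mem_setOf_eq, Set.mem_union]
      constructor
      · rintro ⟨h, hm⟩
        rcases Nat.eq_or_lt_of_le hm with h' | h'
        · exact Or.inr ⟨h, h'⟩
        · exact Or.inl ⟨h, by omega⟩
      · rintro (⟨h, hm⟩ | ⟨h, hm⟩)
        · exact ⟨h, by omega⟩
        · exact ⟨h, by omega⟩
    have hdisj : Disjoint (below e l M) {q | q ∈ cells l ∧ mfun e q = M+1} := by
      rw [Set.disjoint_left]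
      rintro q ⟨_, hq⟩ ⟨_, hq'⟩
      omega
    rw [hstep, ih, hil, hsplit,
      Set.ncard_union_eq hdisj (below_finite hfin M) (hfin.subset fun q hq => hq.1)]

lemma T0_mem {p : ℕ × ℕ} (hp : p ∈ cells l) :
    T0 e l p = (below e l (mfun e p)).ncard := if_pos hp

lemma rank_lt (hfin : (cells l).Finite) {p : ℕ × ℕ} (hp : p ∈ cells l) {M : ℕ}
    (hM : M < mfun e p) : (below e l M).ncard < T0 e l p := by
  rw [T0_mem hp]
  apply Set.ncard_lt_ncard ?_ (below_finite hfin _)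
  rw [Set.ssubset_def]
  constructor
  · rintro q ⟨hq, hm⟩; exact ⟨hq, by omega⟩
  · intro hsub
    have := hsub ⟨hp, le_rfl⟩
    have := this.2
    omega

lemma T0_lt (hfin : (cells l).Finite) {p q : ℕ × ℕ} (hp : p ∈ cells l) (hq : q ∈ cells l)
    (h : mfun e p < mfun e q) : T0 e l p < T0 e l q := by
  rw [T0_mem hp]; exact rank_lt hfin hq h

lemma T0_le (hfin : (cells l).Finite) {p q : ℕ × ℕ} (hp : p ∈ cells l) (hq : q ∈ cells l)
    (h : mfun e p ≤ mfun e q) : T0 e l p ≤ T0 e l q := by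
  rw [T0_mem hp, T0_mem hq]
  exact Set.ncard_le_ncard (fun r hr => ⟨hr.1, le_trans hr.2 h⟩) (below_finite hfin _)

lemma T0_pos (hfin : (cells l).Finite) {p : ℕ × ℕ} (hp : p ∈ cells l) : 1 ≤ T0 e l p := by
  rw [T0_mem hp]
  exact (Set.ncard_pos (below_finite hfin _)).mpr ⟨p, hp, le_rfl⟩

lemma T0_le_d (hl : IsPartitionOf l d) {p : ℕ × ℕ} (hp : p ∈ cells l) : T0 e l p ≤ d := by
  rw [T0_mem hp, ← hl.2.2]
  exact Set.ncard_le_ncard (fun q hq => hq.1) hl.2.1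

lemma T0_inj (he : 2 ≤ e) (hl : IsPartitionOf l d) (hfirst : l 1 < e) {p q : ℕ × ℕ}
    (hp : p ∈ cells l) (hq : q ∈ cells l) (h : T0 e l p = T0 e l q) : p = q := by
  have hfin := hl.2.1
  have hm : mfun e p = mfun e q := by
    rcases lt_trichotomy (mfun e p) (mfun e q) with hc | hc | hc
    · have := T0_lt hfin hp hq hc; omega
    · exact hc
    · have := T0_lt hfin hq hp hc; omega
  exact mfun_inj he hp.1 hp.2.1 (col_lt hl.1 hfirst hp) hq.1 hq.2.1 (col_lt hl.1 hfirst hq) hm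

lemma T0_surj (he : 2 ≤ e) (hl : IsPartitionOf l d) (hfirst : l 1 < e) {s : ℕ}
    (h1 : 1 ≤ s) (h2 : s ≤ d) : ∃ p ∈ cells l, T0 e l p = s := by
  classical
  have hfin := hl.2.1
  have hC : hfin.toFinset.card = d := by
    rw [← hl.2.2, Set.ncard_eq_toFinset_card _ hfin]
  have hsurj := Finset.surj_on_of_inj_on_of_card_le (s := hfin.toFinset)
    (t := Finset.Icc 1 d) (fun p _ => T0 e l p)
    (fun p hp => by
      have hp' : p ∈ cells l := (Set.Finite.mem_toFinset _).mp hp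
      exact Finset.mem_Icc.mpr ⟨T0_pos hfin hp', T0_le_d hl hp'⟩)
    (fun p q hp hq h => T0_inj he hl hfirst
      ((Set.Finite.mem_toFinset _).mp hp) ((Set.Finite.mem_toFinset _).mp hq) h)
    (by rw [Nat.card_Icc, hC]; omega)
  obtain ⟨p, hp, hps⟩ := hsurj s (Finset.mem_Icc.mpr ⟨h1, h2⟩)
  exact ⟨p, (Set.Finite.mem_toFinset _).mp hp, hps.symm⟩

lemma mfun_right {a b : ℕ} : mfun e (a, b+1) = mfun e (a, b) + 1 := by
  show (b+1) + (a - 1) * (e-1) = b + (a - 1) * (e-1) + 1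
  omega

lemma mfun_down (he : 2 ≤ e) {a b : ℕ} (ha : 1 ≤ a) :
    mfun e (a+1, b) = mfun e (a, b) + (e-1) := by
  unfold mfun
  show b + (a + 1 - 1) * (e-1) = b + (a - 1) * (e - 1) + (e - 1)
  rw [show a + 1 - 1 = (a-1) + 1 by omega, Nat.succ_mul]
  omega

lemma T0_standard (he : 2 ≤ e) (hl : IsPartitionOf l d) (hfirst : l 1 < e) :
    IsStandardTableau (cells l) d (T0 e l) := by
  have hfin := hl.2.1
  refine ⟨fun p hp => ⟨T0_pos hfin hp, T0_le_d hl hp⟩,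
    fun p hp q hq h => T0_inj he hl hfirst hp hq h,
    fun s h1 h2 => T0_surj he hl hfirst h1 h2,
    fun a b h1 h2 => T0_lt hfin h1 h2
      (by have h : mfun e (a, b+1) = mfun e (a, b) + 1 := mfun_right; omega),
    fun a b h1 h2 => T0_lt hfin h1 h2
      (by have h : mfun e (a+1, b) = mfun e (a, b) + (e-1) :=
            mfun_down he (show 1 ≤ a from h1.1)
          omega)⟩

lemma res_eq_mfun (he : 2 ≤ e) {p : ℕ × ℕ} (hp : 1 ≤ p.1) :
    res e p = ((mfun e p : ℕ) : ZMod e) - 1 := by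
  unfold res mfun
  have h1 : ((p.1 - 1 : ℕ) : ZMod e) = (p.1 : ZMod e) - 1 := by
    have h := Nat.cast_sub (R := ZMod e) hp
    simpa using h
  have h2 : ((e - 1 : ℕ) : ZMod e) = -1 := by
    have h := Nat.cast_sub (R := ZMod e) (show 1 ≤ e by omega)
    simp [h, ZMod.natCast_self]
  push_cast
  rw [h1, h2]
  ring

lemma ladderWeight_T0 (he : 2 ≤ e) (hl : IsPartitionOf l d) (hfirst : l 1 < e)
    {p : ℕ × ℕ} (hp : p ∈ cells l) :
    ladderWeight e l (T0 e l p) = res e p := by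
  have hfin := hl.2.1
  have hmem : mfun e p ∈ {M : ℕ | T0 e l p ≤ Rlad e l M} := by
    rw [Set.mem_setOf_eq, Rlad_eq hfin, T0_mem hp]
  have hlb : ∀ M ∈ {M : ℕ | T0 e l p ≤ Rlad e l M}, mfun e p ≤ M := by
    intro M hM
    by_contra hc
    have h := rank_lt hfin hp (show M < mfun e p by omega)
    rw [Set.mem_setOf_eq, Rlad_eq hfin] at hM
    omega
  have hinf : sInf {M : ℕ | T0 e l p ≤ Rlad e l M} = mfun e p :=
    le_antisymm (Nat.sInf_le hmem) (hlb _ (Nat.sInf_mem ⟨_, hmem⟩))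
  unfold ladderWeight
  rw [hinf, res_eq_mfun he hp.1, Nat.cast_sub (mfun_pos hp)]
  simp

lemma T0_LWT (he : 2 ≤ e) (hl : IsPartitionOf l d) (hfirst : l 1 < e) :
    T0 e l ∈ LWTableaux e d l (cells l) :=
  ⟨T0_standard he hl hfirst, fun p hp => if_neg hp,
    fun p hp => (ladderWeight_T0 he hl hfirst hp).symm⟩

lemma card_init (hl : IsPartitionOf l d) {U : (ℕ × ℕ) → ℕ}
    (hU : IsStandardTableau (cells l) d U) :
    ∀ s, s ≤ d + 1 → {q | q ∈ cells l ∧ U q < s}.ncard = s - 1 := by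
  have hfin := hl.2.1
  intro s
  induction s with
  | zero =>
    intro _
    have h : {q | q ∈ cells l ∧ U q < 0} = ∅ := by
      ext q; simp
    rw [h, Set.ncard_empty]
  | succ s ih =>
    intro hs
    by_cases hs0 : s = 0
    · subst hs0
      have h : {q | q ∈ cells l ∧ U q < 1} = ∅ := by
        ext q
        simp only [Set.mem_setOf_eq, Set.mem_empty_iff_false, iff_false]
        rintro ⟨hq, hlt⟩
        have := (hU.1 q hq).1
        omega
      rw [h, Set.ncard_empty]
    · obtain ⟨q0, hq0, hq0s⟩ := hU.2.2.1 s (by omega) (by omega)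
      have hsplit : {q | q ∈ cells l ∧ U q < s + 1}
          = {q | q ∈ cells l ∧ U q < s} ∪ {q0} := by
        ext q
        simp only [Set.mem_setOf_eq, Set.mem_union, Set.mem_singleton_iff]
        constructor
        · rintro ⟨hq, hlt⟩
          rcases Nat.lt_or_ge (U q) s with h | h
          · exact Or.inl ⟨hq, h⟩
          · exact Or.inr (hU.2.1 q hq q0 hq0 (by omega))
        · rintro (⟨hq, h⟩ | rfl)
          · exact ⟨hq, by omega⟩
          · exact ⟨hq0, by omega⟩
      have hdisj : Disjoint {q | q ∈ cells l ∧ U q < s} ({q0} : Set (ℕ × ℕ)) := by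
        rw [Set.disjoint_singleton_right]
        rintro ⟨_, h⟩
        omega
      rw [hsplit, Set.ncard_union_eq hdisj (hfin.subset fun q hq => hq.1)
        (Set.finite_singleton _), ih (by omega), Set.ncard_singleton]
      omega

lemma LWT_unique (he : 2 ≤ e) (hl : IsPartitionOf l d) (hfirst : l 1 < e)
    {T : (ℕ × ℕ) → ℕ} (hT : T ∈ LWTableaux e d l (cells l)) : T = T0 e l := by
  have hfin := hl.2.1
  obtain ⟨hstd, hoff, hres⟩ := hT
  have key : ∀ s : ℕ, ∀ p ∈ cells l, T p = s → T0 e l p = s := by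
    intro s
    induction s using Nat.strong_induction_on with
    | _ s ih =>
      intro p hp hTp
      have hs1 : 1 ≤ s := by have := (hstd.1 p hp).1; omega
      have hsd : s ≤ d := by have := (hstd.1 p hp).2; omega
      have hseg : {q | q ∈ cells l ∧ T q < s} = {q | q ∈ cells l ∧ T0 e l q < s} := by
        apply Set.eq_of_subset_of_ncard_le
        · rintro q ⟨hq, hlt⟩
          exact ⟨hq, by rw [ih (T q) hlt q hq rfl]; exact hlt⟩
        · rw [card_init hl (T0_standard he hl hfirst) s (by omega),
            card_init hl hstd s (by omega)]
        · exact hfin.subset fun q hq => hq.1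
      obtain ⟨p0, hp0, hp0s⟩ := T0_surj he hl hfirst hs1 hsd
      have hmge : mfun e p0 ≤ mfun e p := by
        by_contra hc
        have h1 : T0 e l p < s := by
          rw [← hp0s]; exact T0_lt hfin hp hp0 (by omega)
        have h2 : p ∈ {q | q ∈ cells l ∧ T0 e l q < s} := ⟨hp, h1⟩
        rw [← hseg] at h2
        have := h2.2
        omega
      have hres1 : res e p = ladderWeight e l s := by rw [← hTp]; exact hres p hp
      have hres2 : res e p0 = ladderWeight e l s := by
        rw [← hp0s]; exact (ladderWeight_T0 he hl hfirst hp0).symm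
      have hcast : ((mfun e p : ℕ) : ZMod e) = ((mfun e p0 : ℕ) : ZMod e) := by
        have h := hres1.trans hres2.symm
        rw [res_eq_mfun he hp.1, res_eq_mfun he hp0.1] at h
        exact sub_left_inj.mp h
      rcases Nat.eq_or_lt_of_le hmge with heq | hlt
      · have hpq : p = p0 := mfun_inj he hp.1 hp.2.1 (col_lt hl.1 hfirst hp)
          hp0.1 hp0.2.1 (col_lt hl.1 hfirst hp0) heq.symm
        rw [hpq, hp0s]
      · exfalso
        have hdvd : e ∣ mfun e p - mfun e p0 :=
          (Nat.modEq_iff_dvd' hmge).mp ((ZMod.natCast_eq_natCast_iff _ _ _).mp hcast.symm)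
        have hge : mfun e p0 + e ≤ mfun e p := by
          have := Nat.le_of_dvd (by omega) hdvd
          omega
        have hbelow : ∀ q ∈ cells l, T q < s → mfun e q < mfun e p0 := by
          intro q hq hlt'
          have h2 : q ∈ {q | q ∈ cells l ∧ T0 e l q < s} := by
            rw [← hseg]; exact ⟨hq, hlt'⟩
          by_contra hc
          have : T0 e l p0 ≤ T0 e l q := T0_le hfin hp0 hq (by omega)
          have := h2.2
          omega
        obtain ⟨a, b⟩ := p
        have ha1 : 1 ≤ a := hp.1
        have hb1 : 1 ≤ b := hp.2.1
        have hble : b ≤ l a := hp.2.2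
        by_cases hb2 : 2 ≤ b
        · have hq1 : (a, b-1) ∈ cells l := ⟨ha1, by omega, by show b - 1 ≤ l a; omega⟩
          have hTlt : T (a, b-1) < s := by
            have h := hstd.2.2.2.1 a (b-1) hq1
              (by rw [show b-1+1 = b by omega]; exact hp)
            rw [show b-1+1 = b by omega] at h
            omega
          have hlt1 := hbelow _ hq1 hTlt
          have hm1 : mfun e (a, b-1) + 1 = mfun e (a, b) := by
            show (b-1) + (a - 1) * (e-1) + 1 = b + (a - 1) * (e-1)
            omega
          omega
        · by_cases ha2 : 2 ≤ a
          · have hq1 : (a-1, b) ∈ cells l :=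
              ⟨by omega, hb1, le_trans hble (l_anti hl.1 (a-1) a (by omega) (by omega))⟩
            have hTlt : T (a-1, b) < s := by
              have h := hstd.2.2.2.2 (a-1) b hq1
                (by rw [show a-1+1 = a by omega]; exact hp)
              rw [show a-1+1 = a by omega] at h
              omega
            have hlt1 := hbelow _ hq1 hTlt
            have hm1 := mfun_down he (show 1 ≤ a - 1 by omega) (b := b)
            rw [show a-1+1 = a by omega] at hm1
            omega
          · have hm1 : mfun e (a, b) = 1 := by
              unfold mfun
              show b + (a - 1) * (e - 1) = 1
              rw [show a - 1 = 0 by omega]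
              omega
            have := mfun_pos (e := e) hp0
            omega
  funext p
  by_cases hp : p ∈ cells l
  · exact (key (T p) p hp rfl).symm
  · rw [hoff p hp]
    unfold T0
    rw [if_neg hp]

lemma shape_T0 (hl : IsPartitionOf l d) {p : ℕ × ℕ} (hp : p ∈ cells l) :
    {q | q ∈ cells l ∧ T0 e l q ≤ T0 e l p} = below e l (mfun e p) := by
  have hfin := hl.2.1
  ext q
  simp only [Set.mem_setOf_eq, below]
  constructor
  · rintro ⟨hq, hle⟩
    refine ⟨hq, ?_⟩
    by_contra hc
    have := T0_lt hfin hp hq (show mfun e p < mfun e q by omega)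
    omega
  · rintro ⟨hq, hle⟩
    exact ⟨hq, T0_le hfin hq hp hle⟩

lemma deg_zero (he : 2 ≤ e) (hl : IsPartitionOf l d) (hfirst : l 1 < e)
    {p : ℕ × ℕ} (hp : p ∈ cells l) :
    degNode e (below e l (mfun e p)) p = 0 := by
  have hfin := hl.2.1
  have hcol := col_lt hl.1 hfirst hp
  have hp1 : 1 ≤ p.1 := hp.1
  have hnum : ∀ B : ℕ × ℕ, 1 ≤ B.2 → p.1 < B.1 → mfun e B ≤ mfun e p → False := by
    intro B hB2 hB1 hm
    have hkey : ((p.1 - 1) + 1) * (e-1) ≤ (B.1 - 1) * (e-1) :=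
      Nat.mul_le_mul_right _ (by omega)
    have hd : ((p.1-1)+1) * (e-1) = (p.1-1) * (e-1) + (e-1) := by ring
    unfold mfun at hm
    omega
  have h1 : {B | Removable (below e l (mfun e p)) B ∧ res e B = res e p ∧ p.1 < B.1}
      = ∅ := by
    ext B
    simp only [Set.mem_setOf_eq, Set.mem_empty_iff_false, iff_false]
    rintro ⟨⟨hBS, _⟩, _, hB1⟩
    exact hnum B hBS.1.2.1 hB1 hBS.2
  have h2 : {B | Addable (below e l (mfun e p)) B ∧ res e B = res e p ∧ p.1 < B.1}
      = ∅ := by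
    ext B
    simp only [Set.mem_setOf_eq, Set.mem_empty_iff_false, iff_false]
    rintro ⟨⟨hBnot, hdia⟩, hresB, hB1⟩
    obtain ⟨a, b⟩ := B
    have hB1' : p.1 < a := hB1
    have hmem : (a, b) ∈ below e l (mfun e p) ∪ {(a, b)} := Or.inr rfl
    have hcoord := hdia.1 (a, b) hmem
    have ha1 : 1 ≤ a := hcoord.1
    have hb1 : 1 ≤ b := hcoord.2
    have ha2 : 2 ≤ a := by omega
    have hup : (a-1, b) ∈ below e l (mfun e p) := by
      have h := hdia.2 a b (a-1) b hmem (by omega) (by omega) hb1 le_rfl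
      rcases h with h | h
      · exact h
      · exfalso
        have h' : (a-1, b) = (a, b) := h
        have := congrArg Prod.fst h'
        simp at this
        omega
    have hdown := mfun_down he (show 1 ≤ a - 1 by omega) (b := b)
    rw [show a-1+1 = a by omega] at hdown
    have hb2 : mfun e (a-1, b) ≤ mfun e p := hup.2
    have hcast : ((mfun e (a, b) : ℕ) : ZMod e) = ((mfun e p : ℕ) : ZMod e) := by
      have h := hresB
      rw [res_eq_mfun he (show 1 ≤ (a, b).1 from ha1), res_eq_mfun he hp1] at h
      exact sub_left_inj.mp h
    have hle : mfun e (a, b) ≤ mfun e p := by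
      by_contra hc
      push_neg at hc
      have hdvd : e ∣ mfun e (a, b) - mfun e p :=
        (Nat.modEq_iff_dvd' (le_of_lt hc)).mp
          ((ZMod.natCast_eq_natCast_iff _ _ _).mp hcast.symm)
      have := Nat.le_of_dvd (by omega) hdvd
      omega
    exact hnum (a, b) hb1 hB1' hle
  rw [degNode, h1, h2]
  simp

lemma degTab_T0 (he : 2 ≤ e) (hl : IsPartitionOf l d) (hfirst : l 1 < e) :
    degTab e (cells l) (T0 e l) = 0 := by
  unfold degTab
  have h : ∀ p ∈ cells l,
      degNode e {q | q ∈ cells l ∧ T0 e l q ≤ T0 e l p} p = (0 : ℤ) := by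
    intro p hp
    rw [shape_T0 hl hp]
    exact deg_zero he hl hfirst hp
  rw [finsum_mem_congr rfl h]
  simp

end aux

/-- if `λ₁ < e`, the ladder weight multiplicity in `S(λ)` is `1`; there
is exactly one standard `λ`-tableau with `i^T = j^λ` and it has degree `0`. -/
theorem ladder_weight_multiplicity_one
    (e d : ℕ) (he : 2 ≤ e) (l : ℕ → ℕ)
    (hl : IsPartitionOf l d) (hfirst : l 1 < e) :
    (∑ᶠ T ∈ LWTableaux e d l (cells l),
        (LaurentPolynomial.T (degTab e (cells l) T) : LaurentPolynomial ℤ) = 1) ∧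
      ∃ T : (ℕ × ℕ) → ℕ, LWTableaux e d l (cells l) = {T} ∧
        degTab e (cells l) T = 0 := by
  have hset : LWTableaux e d l (cells l) = {T0 e l} := by
    ext T
    simp only [Set.mem_singleton_iff]
    exact ⟨fun h => LWT_unique he hl hfirst h,
      fun h => h ▸ T0_LWT he hl hfirst⟩
  constructor
  · rw [hset, finsum_mem_singleton, degTab_T0 he hl hfirst, LaurentPolynomial.T_zero]
  · exact ⟨T0 e l, hset, degTab_T0 he hl hfirst⟩

end KN
end

section
/- Let e ≥ 2 and let λ = (l₁^{k₁}, l₂^{k₂}, …, l_s^{k_s}) be an e-restricted partition (part l_i repeated k_i ≥ 1 times) with l₁ = e and l₁ > l₂ > ⋯ > l_s ≥ 1. Then there are exactly k₁ indices m with |λ ∩ L_m| = 2, and |λ ∩ L_m| ≤ 1 for all other m. -/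
namespace KN

/-!
Node `(1 + k, b)` lies on ladder `k (e - 1) + b`. As every row has length `≤ e < 2 (e - 1) + 1`,
a ladder meets at most two rows, and if it meets two they are consecutive rows `1 + k`, `2 + k`,
the first of length `e`, and the ladder is `(k + 1) (e - 1) + 1` through `(1 + k, e)` and
`(2 + k, 1)`. Restrictedness makes row `2 + k` nonempty whenever row `1 + k` has length `e`, so
each of the `k₁` rows of length `e` yields exactly one ladder meeting `λ` twice.
-/

section Ladders

variable {e : ℕ} {l : ℕ → ℕ}

theorem mem_cells_inter_ladder_iff {u : ℕ} {p : ℕ × ℕ} :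
    p ∈ cells l ∩ ladder e u ↔
      ∃ k, k * (e - 1) < u ∧ u ≤ k * (e - 1) + l (1 + k) ∧ p = (1 + k, u - k * (e - 1)) := by
  constructor
  · rintro ⟨⟨-, -, hle⟩, k, hk, rfl⟩
    exact ⟨k, hk, by simp only at hle; omega, rfl⟩
  · rintro ⟨k, hk, hu, rfl⟩
    exact ⟨⟨by omega, by simp only; omega, by simp only; omega⟩, k, hk, rfl⟩

/-- If all rows have length `≤ e` and ladder `u` meets rows `1 + j` and `1 + j'`, these rows are
adjacent and the ladder passes through the last node `(1 + j, e)` of the upper one. -/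
theorem ladder_overlap (he : 2 ≤ e) (hle : ∀ r, 1 ≤ r → l r ≤ e) {u j j' : ℕ}
    (hj : u ≤ j * (e - 1) + l (1 + j)) (hj' : j' * (e - 1) < u) (hjj' : j < j') :
    j' = j + 1 ∧ l (1 + j) = e ∧ u = (j + 1) * (e - 1) + 1 := by
  have hlj := hle (1 + j) (by omega)
  have hsucc : (j + 1) * (e - 1) = j * (e - 1) + (e - 1) := add_one_mul j (e - 1)
  have hj'_le : j' ≤ j + 1 :=
    Nat.le_of_mul_le_mul_right (by omega : j' * (e - 1) ≤ (j + 1) * (e - 1)) (by omega)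
  obtain rfl : j' = j + 1 := by omega
  omega

theorem cells_inter_ladder_subsingleton (he : 2 ≤ e) (hle : ∀ r, 1 ≤ r → l r ≤ e) {u : ℕ}
    (hu : ∀ j, u = (j + 1) * (e - 1) + 1 → l (1 + j) < e) :
    (cells l ∩ ladder e u).Subsingleton := by
  have no_two_rows : ∀ j j', j < j' → u ≤ j * (e - 1) + l (1 + j) → j' * (e - 1) < u → False :=
    fun j j' hjj' hj hj' ↦ by
      obtain ⟨-, hlj, hu_eq⟩ := ladder_overlap he hle hj hj' hjj'
      exact (hu j hu_eq).ne hlj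
  intro p hp q hq
  obtain ⟨j, hj₁, hj₂, rfl⟩ := mem_cells_inter_ladder_iff.1 hp
  obtain ⟨j', hj'₁, hj'₂, rfl⟩ := mem_cells_inter_ladder_iff.1 hq
  rcases lt_trichotomy j j' with h | rfl | h
  · exact (no_two_rows j j' h hj₂ hj'₁).elim
  · rfl
  · exact (no_two_rows j' j h hj'₂ hj₁).elim

theorem cells_inter_ladder_eq_pair (he : 2 ≤ e) (hle : ∀ r, 1 ≤ r → l r ≤ e)
    (hrestr : IsRestricted e l) {k : ℕ} (hk : l (k + 1) = e) :
    cells l ∩ ladder e ((k + 1) * (e - 1) + 1) = {(k + 1, e), (k + 2, 1)} := by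
  have hsucc (j : ℕ) : (j + 1) * (e - 1) = j * (e - 1) + (e - 1) := add_one_mul j (e - 1)
  have hnext : 1 ≤ l (k + 1 + 1) := by have := hrestr (k + 1) (by omega); omega
  ext p
  rw [mem_cells_inter_ladder_iff, Set.mem_insert_iff, Set.mem_singleton_iff]
  constructor
  · rintro ⟨j, hj₁, hj₂, rfl⟩
    have hlj := hle (1 + j) (by omega)
    have hj_le : j ≤ k + 1 :=
      Nat.le_of_mul_le_mul_right (by omega : j * (e - 1) ≤ (k + 1) * (e - 1)) (by omega)
    have hk_le : k + 1 ≤ j + 1 :=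
      Nat.le_of_mul_le_mul_right
        (by have := hsucc j; omega : (k + 1) * (e - 1) ≤ (j + 1) * (e - 1)) (by omega)
    obtain rfl | rfl : j = k ∨ j = k + 1 := by omega
    · left; have := hsucc j; ext <;> simp only <;> omega
    · right; ext <;> simp only <;> omega
  · have := hsucc k
    rintro (rfl | rfl)
    · exact ⟨k, by omega, by rw [add_comm 1 k]; omega, by ext <;> simp only <;> omega⟩
    · exact ⟨k + 1, by omega, by rw [add_comm 1 (k + 1)]; omega, by ext <;> simp only <;> omega⟩

theorem ncard_cells_inter_ladder_eq_two (he : 2 ≤ e) (hle : ∀ r, 1 ≤ r → l r ≤ e)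
    (hrestr : IsRestricted e l) {k : ℕ} (hk : l (k + 1) = e) :
    (cells l ∩ ladder e ((k + 1) * (e - 1) + 1)).ncard = 2 := by
  rw [cells_inter_ladder_eq_pair he hle hrestr hk]
  exact Set.ncard_pair (by simp)

theorem strictMono_ladder_index (he : 2 ≤ e) : StrictMono fun k ↦ (k + 1) * (e - 1) + 1 :=
  strictMono_nat_of_lt_succ fun k ↦ by
    have := add_one_mul (k + 1) (e - 1)
    omega

end Ladders

structure IsHookShape (e n : ℕ) (l : ℕ → ℕ) : Prop where
  long : ∀ r, 1 ≤ r → r ≤ n → l r = e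
  short : ∀ r, n < r → l r < e

namespace IsHookShape

variable {e n : ℕ} {l : ℕ → ℕ}

theorem apply_le (h : IsHookShape e n l) (r : ℕ) (hr : 1 ≤ r) : l r ≤ e := by
  rcases le_or_gt r n with hrn | hrn
  · exact (h.long r hr hrn).le
  · exact (h.short r hrn).le

theorem ncard_cells_inter_ladder_le_one (h : IsHookShape e n l) (he : 2 ≤ e) {u : ℕ}
    (hu : u ∉ (fun k ↦ (k + 1) * (e - 1) + 1) '' Set.Iio n) :
    (cells l ∩ ladder e u).ncard ≤ 1 := by
  have hsub := cells_inter_ladder_subsingleton he h.apply_le fun j hj ↦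
    h.short (1 + j) (by by_contra! hjn; exact hu ⟨j, by simp only [Set.mem_Iio]; omega, hj.symm⟩)
  exact (Set.ncard_le_one hsub.finite).2 hsub

theorem setOf_ncard_cells_inter_ladder_eq_two (h : IsHookShape e n l) (he : 2 ≤ e)
    (hrestr : IsRestricted e l) :
    {u | 1 ≤ u ∧ (cells l ∩ ladder e u).ncard = 2} =
      (fun k ↦ (k + 1) * (e - 1) + 1) '' Set.Iio n := by
  ext u
  constructor
  · rintro ⟨-, hu⟩
    by_contra hmem
    have := h.ncard_cells_inter_ladder_le_one he hmem
    omega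
  · rintro ⟨k, hk, rfl⟩
    exact ⟨Nat.le_add_left 1 _, ncard_cells_inter_ladder_eq_two he h.apply_le hrestr (h.long (k + 1) (by omega) hk)⟩

end IsHookShape

theorem isHookShape_of_parts {e s : ℕ} (he : 1 ≤ e) (hs : 1 ≤ s) {l L K : ℕ → ℕ}
    (hl : IsPartitionFun l) (hL1 : L 1 = e)
    (hLdec : ∀ i, 1 ≤ i → i < s → L (i + 1) < L i)
    (hKpos : ∀ i, 1 ≤ i → i ≤ s → 1 ≤ K i)
    (hparts : ∀ i, 1 ≤ i → i ≤ s → ∀ rr, (∑ j ∈ Finset.Icc 1 (i - 1), K j) < rr →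
      rr ≤ ∑ j ∈ Finset.Icc 1 i, K j → l rr = L i)
    (hzero : ∀ rr, (∑ j ∈ Finset.Icc 1 s, K j) < rr → l rr = 0) :
    IsHookShape e (K 1) l := by
  refine ⟨fun r hr hrK ↦ hL1 ▸ hparts 1 le_rfl hs r (by simp; omega) (by simpa using hrK),
    fun r hr ↦ ?_⟩
  rcases Nat.lt_or_ge s 2 with hs2 | hs2
  · obtain rfl : s = 1 := by omega
    rw [hzero r (by simpa using hr)]
    omega
  · have hsum : ∑ j ∈ Finset.Icc 1 2, K j = K 1 + K 2 := by
      rw [show Finset.Icc 1 2 = {1, 2} by decide, Finset.sum_pair (by norm_num)]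
    have hrow : l (K 1 + 1) = L 2 :=
      hparts 2 (by omega) hs2 (K 1 + 1) (by simp)
        (by have := hKpos 2 (by omega) hs2; omega)
    have hanti := antitoneOn_nat_Ici_of_succ_le (k := 1) hl.1
    calc l r ≤ l (K 1 + 1) := hanti (by simp) (by simp; omega) hr
      _ = L 2 := hrow
      _ < e := hL1 ▸ hLdec 1 le_rfl (by omega)

theorem ladder_sizes_hook_case_general
    (e s : ℕ) (he : 2 ≤ e) (hs : 1 ≤ s)
    (l : ℕ → ℕ) (L K : ℕ → ℕ)
    (hl : IsPartitionFun l) (hrestr : IsRestricted e l)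
    (hL1 : L 1 = e)
    (hLdec : ∀ i, 1 ≤ i → i < s → L (i + 1) < L i)
    (hKpos : ∀ i, 1 ≤ i → i ≤ s → 1 ≤ K i)
    (hparts : ∀ i, 1 ≤ i → i ≤ s → ∀ rr, (∑ j ∈ Finset.Icc 1 (i - 1), K j) < rr →
      rr ≤ ∑ j ∈ Finset.Icc 1 i, K j → l rr = L i)
    (hzero : ∀ rr, (∑ j ∈ Finset.Icc 1 s, K j) < rr → l rr = 0) :
    {u : ℕ | 1 ≤ u ∧ (cells l ∩ ladder e u).ncard = 2}.ncard = K 1 ∧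
      ∀ u, 1 ≤ u → (cells l ∩ ladder e u).ncard ≠ 2 →
        (cells l ∩ ladder e u).ncard ≤ 1 := by
  have hhook := isHookShape_of_parts (by omega) hs hl hL1 hLdec hKpos hparts hzero
  have hset := hhook.setOf_ncard_cells_inter_ladder_eq_two he hrestr
  refine ⟨?_, fun u hu hne ↦ hhook.ncard_cells_inter_ladder_le_one he fun hmem ↦ ?_⟩
  · rw [hset, Set.ncard_image_of_injective _ (strictMono_ladder_index he).injective,
      Set.ncard_Iio_nat]
  · rw [← hset] at hmem
    exact hne hmem.2

/-- for `λ = (l₁^{k₁}, …, l_s^{k_s})` `e`-restricted with `l₁ = e` and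
strictly decreasing part sizes, exactly `k₁` ladders meet `λ` in two nodes and all
other ladders meet `λ` in at most one node. -/
theorem ladder_sizes_hook_case
    (e s : ℕ) (he : 2 ≤ e) (hs : 1 ≤ s)
    (l : ℕ → ℕ) (L K : ℕ → ℕ)
    (hl : IsPartitionFun l) (hrestr : IsRestricted e l)
    (hL1 : L 1 = e)
    (hLdec : ∀ i, 1 ≤ i → i < s → L (i + 1) < L i)
    (hLpos : ∀ i, 1 ≤ i → i ≤ s → 1 ≤ L i)
    (hKpos : ∀ i, 1 ≤ i → i ≤ s → 1 ≤ K i)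
    (hparts : ∀ i, 1 ≤ i → i ≤ s → ∀ rr, (∑ j ∈ Finset.Icc 1 (i - 1), K j) < rr →
      rr ≤ ∑ j ∈ Finset.Icc 1 i, K j → l rr = L i)
    (hzero : ∀ rr, (∑ j ∈ Finset.Icc 1 s, K j) < rr → l rr = 0) :
    {u : ℕ | 1 ≤ u ∧ (cells l ∩ ladder e u).ncard = 2}.ncard = K 1 ∧
      ∀ u, 1 ≤ u → (cells l ∩ ladder e u).ncard ≠ 2 →
        (cells l ∩ ladder e u).ncard ≤ 1 :=
  ladder_sizes_hook_case_general e s he hs l L K hl hrestr hL1 hLdec hKpos hparts hzero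

end KN
end
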